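/- Let Φ and Φ̃ be N-functions with indices s(Φ) ≥ 1 and s(Φ̃) ≥ 1 respectively. Then the pointwise product t ↦ Φ(t)·Φ̃(t) is an N-function with index 4·s(Φ)·s(Φ̃)·(s(Φ) + s(Φ̃)). -/

import Mathlib

/-!
With `Ψ = Φ₁ Φ₂` we have `t Ψ'' = t Φ₁'' Φ₂ + 2 t Φ₁' Φ₂' + t Φ₁ Φ₂''`. Dropping the nonnegative cross
term gives the lower index bound; for the upper one, the cross term is controlled by the
inequality `t Φ'(t) ≤ (s + 1) Φ(t)`, valid for every N-function of index `s`. Hence `Ψ` is an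
N-function of index `s₁ + s₂ + 1`, and the index of an N-function may always be enlarged.
-/

open Real Set Filter MeasureTheory
open scoped RealInnerProductSpace

/-- An N-function with index `s ≥ 1`: a function `Φ : [0,∞) → [0,∞)` with `Φ(0) = 0`,
strictly increasing and convex, `Φ(t)/t → 0` as `t → 0⁺`, `Φ(t)/t → ∞` as `t → ∞`,
continuously differentiable on `[0,∞)`, twice continuously differentiable on `(0,∞)`,
and `Φ'(t) > 0` with `(1/s)·Φ'(t) ≤ t·Φ''(t) ≤ s·Φ'(t)` for every `t > 0`. -/
structure IsNFunction (Φ : ℝ → ℝ) (s : ℝ) : Prop where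
  s_ge_one : 1 ≤ s
  nonneg : ∀ t, 0 ≤ t → 0 ≤ Φ t
  zero : Φ 0 = 0
  strictMonoOn : StrictMonoOn Φ (Ici 0)
  convexOn : ConvexOn ℝ (Ici 0) Φ
  tendsto_zero : Tendsto (fun t => Φ t / t) (nhdsWithin 0 (Ioi 0)) (nhds 0)
  tendsto_atTop : Tendsto (fun t => Φ t / t) atTop atTop
  contDiffOn_one : ContDiffOn ℝ 1 Φ (Ici 0)
  contDiffOn_two : ContDiffOn ℝ 2 Φ (Ioi 0)
  deriv_pos : ∀ t, 0 < t → 0 < deriv Φ t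
  index_lower : ∀ t, 0 < t → (1 / s) * deriv Φ t ≤ t * deriv (deriv Φ) t
  index_upper : ∀ t, 0 < t → t * deriv (deriv Φ) t ≤ s * deriv Φ t

open scoped Topology

lemma deriv_deriv_mul {f g : ℝ → ℝ} {x : ℝ} (hf : ContDiffAt ℝ 2 f x) (hg : ContDiffAt ℝ 2 g x) :
    deriv (deriv fun y => f y * g y) x =
      deriv (deriv f) x * g x + 2 * (deriv f x * deriv g x) + f x * deriv (deriv g) x := by
  have h := iteratedDeriv_fun_mul hf hg
  simp only [iteratedDeriv_succ, iteratedDeriv_zero, Finset.sum_range_succ,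
    Finset.sum_range_zero] at h
  rw [h]
  norm_num
  ring

namespace IsNFunction

variable {Φ Φ₁ Φ₂ : ℝ → ℝ} {s s₁ s₂ : ℝ} {t : ℝ}

lemma mono (h : IsNFunction Φ s) {S : ℝ} (hsS : s ≤ S) : IsNFunction Φ S :=
  have hs : 0 < s := zero_lt_one.trans_le h.s_ge_one
  { h with
    s_ge_one := h.s_ge_one.trans hsS
    index_lower := fun t ht => (mul_le_mul_of_nonneg_right
      (one_div_le_one_div_of_le hs hsS) (h.deriv_pos t ht).le).trans (h.index_lower t ht)
    index_upper := fun t ht => (h.index_upper t ht).trans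
      (mul_le_mul_of_nonneg_right hsS (h.deriv_pos t ht).le) }

lemma pos (h : IsNFunction Φ s) (ht : 0 < t) : 0 < Φ t := by
  simpa [h.zero] using h.strictMonoOn self_mem_Ici (mem_Ici.2 ht.le) ht

lemma contDiffAt (h : IsNFunction Φ s) (ht : 0 < t) : ContDiffAt ℝ 2 Φ t :=
  h.contDiffOn_two.contDiffAt (Ioi_mem_nhds ht)

lemma hasDerivAt (h : IsNFunction Φ s) (ht : 0 < t) : HasDerivAt Φ (deriv Φ t) t :=
  ((h.contDiffAt ht).differentiableAt two_ne_zero).hasDerivAt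

lemma hasDerivAt_deriv (h : IsNFunction Φ s) (ht : 0 < t) :
    HasDerivAt (deriv Φ) (deriv (deriv Φ) t) t :=
  (((h.contDiffOn_two.deriv_of_isOpen isOpen_Ioi (by norm_num)).contDiffAt
    (Ioi_mem_nhds ht)).differentiableAt one_ne_zero).hasDerivAt

lemma tendsto_nhdsGT_zero (h : IsNFunction Φ s) : Tendsto Φ (𝓝[>] 0) (𝓝 0) := by
  simpa [ContinuousWithinAt, h.zero] using
    (h.contDiffOn_one.continuousOn 0 self_mem_Ici).mono Ioi_subset_Ici_self

lemma tendsto_mul_deriv_nhdsGT_zero (h : IsNFunction Φ s) :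
    Tendsto (fun x => x * deriv Φ x) (𝓝[>] 0) (𝓝 0) := by
  have hderiv : Tendsto (derivWithin Φ (Ici 0)) (𝓝[>] 0) (𝓝 (derivWithin Φ (Ici 0) 0)) :=
    ((h.contDiffOn_one.continuousOn_derivWithin (uniqueDiffOn_Ici 0) le_rfl) 0
      self_mem_Ici).mono Ioi_subset_Ici_self
  have hid : Tendsto (fun x : ℝ => x) (𝓝[>] 0) (𝓝 0) := nhdsWithin_le_nhds
  refine (zero_mul (derivWithin Φ (Ici 0) 0) ▸ hid.mul hderiv).congr' ?_
  filter_upwards [self_mem_nhdsWithin] with x hx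
  rw [derivWithin_of_mem_nhds (Ici_mem_nhds hx)]

/-- `x Φ'(x) - (s+1) Φ(x)` is antitone on `(0, ∞)`, since its derivative is `x Φ'' - s Φ' ≤ 0`,
and it vanishes at `0⁺`. -/
lemma mul_deriv_le (h : IsNFunction Φ s) (ht : 0 < t) : t * deriv Φ t ≤ (s + 1) * Φ t := by
  set g : ℝ → ℝ := fun x => (s + 1) * Φ x - x * deriv Φ x
  set g' : ℝ → ℝ := fun x => (s + 1) * deriv Φ x - (1 * deriv Φ x + x * deriv (deriv Φ) x)
  have hg : ∀ x ∈ Ioi (0 : ℝ), HasDerivAt g (g' x) x :=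
    fun x hx => ((h.hasDerivAt hx).const_mul _).sub ((hasDerivAt_id x).mul (h.hasDerivAt_deriv hx))
  have hmono : MonotoneOn g (Ioi 0) := by
    refine monotoneOn_of_hasDerivWithinAt_nonneg (f' := g') (convex_Ioi 0)
      (fun x hx => (hg x hx).continuousAt.continuousWithinAt) ?_ ?_ <;> rw [interior_Ioi]
    · exact fun x hx => (hg x hx).hasDerivWithinAt
    · intro x hx
      linarith [h.index_upper x hx]
  have hlim : Tendsto g (𝓝[>] 0) (𝓝 0) := by
    simpa using (h.tendsto_nhdsGT_zero.const_mul (s + 1)).sub h.tendsto_mul_deriv_nhdsGT_zero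
  have : 0 ≤ g t := le_of_tendsto hlim <| by
    filter_upwards [Ioo_mem_nhdsGT ht] with x hx
    exact hmono hx.1 ht hx.2.le
  simpa [g] using this

lemma tendsto_atTop_atTop (h : IsNFunction Φ s) : Tendsto Φ atTop atTop := by
  refine tendsto_atTop_mono' atTop ?_ tendsto_id
  filter_upwards [h.tendsto_atTop.eventually_ge_atTop 1, eventually_gt_atTop 0] with t h1 h0
  simpa [le_div_iff₀ h0] using h1

lemma strictMonoOn_mul (h₁ : IsNFunction Φ₁ s₁) (h₂ : IsNFunction Φ₂ s₂) :
    StrictMonoOn (fun t => Φ₁ t * Φ₂ t) (Ici 0) := by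
  intro x hx y hy hxy
  rcases (mem_Ici.1 hx).eq_or_lt with rfl | hx₀
  · simpa [h₁.zero] using mul_pos (h₁.pos hxy) (h₂.pos hxy)
  · exact mul_lt_mul (h₁.strictMonoOn hx hy hxy) (h₂.strictMonoOn hx hy hxy).le
      (h₂.pos hx₀) (h₁.nonneg y hy)

lemma deriv_mul (h₁ : IsNFunction Φ₁ s₁) (h₂ : IsNFunction Φ₂ s₂) (ht : 0 < t) :
    deriv (fun t => Φ₁ t * Φ₂ t) t = deriv Φ₁ t * Φ₂ t + Φ₁ t * deriv Φ₂ t :=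
  ((h₁.hasDerivAt ht).mul (h₂.hasDerivAt ht)).deriv

/-- The cross term `2 t Φ₁' Φ₂'` of `t (Φ₁Φ₂)''` is nonnegative and can be dropped. -/
lemma index_lower_mul (h₁ : IsNFunction Φ₁ s₁) (h₂ : IsNFunction Φ₂ s₂) (ht : 0 < t) :
    1 / (s₁ + s₂ + 1) * deriv (fun t => Φ₁ t * Φ₂ t) t ≤
      t * deriv (deriv fun t => Φ₁ t * Φ₂ t) t := by
  rw [h₁.deriv_mul h₂ ht, deriv_deriv_mul (h₁.contDiffAt ht) (h₂.contDiffAt ht)]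
  have hs₁ := h₁.s_ge_one
  have hs₂ := h₂.s_ge_one
  have hS₁ : 1 / (s₁ + s₂ + 1) ≤ 1 / s₁ := one_div_le_one_div_of_le (by linarith) (by linarith)
  have hS₂ : 1 / (s₁ + s₂ + 1) ≤ 1 / s₂ := one_div_le_one_div_of_le (by linarith) (by linarith)
  have hA := h₁.pos ht
  have hB := h₂.pos ht
  have ha := h₁.deriv_pos t ht
  have hb := h₂.deriv_pos t ht
  have l₁ := mul_le_mul_of_nonneg_right (h₁.index_lower t ht) hB.le
  have l₂ := mul_le_mul_of_nonneg_left (h₂.index_lower t ht) hA.le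
  have := mul_le_mul_of_nonneg_right hS₁ (mul_pos ha hB).le
  have := mul_le_mul_of_nonneg_right hS₂ (mul_pos hA hb).le
  nlinarith [mul_pos (mul_pos ht ha) hb]

/-- Splitting the cross term as `t Φ₁' Φ₂' + t Φ₁' Φ₂'` and bounding each copy by `mul_deriv_le`
applied to one factor. -/
lemma index_upper_mul (h₁ : IsNFunction Φ₁ s₁) (h₂ : IsNFunction Φ₂ s₂) (ht : 0 < t) :
    t * deriv (deriv fun t => Φ₁ t * Φ₂ t) t ≤
      (s₁ + s₂ + 1) * deriv (fun t => Φ₁ t * Φ₂ t) t := by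
  rw [h₁.deriv_mul h₂ ht, deriv_deriv_mul (h₁.contDiffAt ht) (h₂.contDiffAt ht)]
  have u₁ := mul_le_mul_of_nonneg_right (h₁.index_upper t ht) (h₂.pos ht).le
  have u₂ := mul_le_mul_of_nonneg_left (h₂.index_upper t ht) (h₁.pos ht).le
  have k₁ := mul_le_mul_of_nonneg_right (h₁.mul_deriv_le ht) (h₂.deriv_pos t ht).le
  have k₂ := mul_le_mul_of_nonneg_left (h₂.mul_deriv_le ht) (h₁.deriv_pos t ht).le
  nlinarith

protected lemma mul (h₁ : IsNFunction Φ₁ s₁) (h₂ : IsNFunction Φ₂ s₂) :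
    IsNFunction (fun t => Φ₁ t * Φ₂ t) (s₁ + s₂ + 1) where
  s_ge_one := by linarith [h₁.s_ge_one, h₂.s_ge_one]
  nonneg t ht := mul_nonneg (h₁.nonneg t ht) (h₂.nonneg t ht)
  zero := by simp [h₁.zero]
  strictMonoOn := h₁.strictMonoOn_mul h₂
  convexOn := h₁.convexOn.mul h₂.convexOn h₁.nonneg h₂.nonneg
    (h₁.strictMonoOn.monotoneOn.monovaryOn h₂.strictMonoOn.monotoneOn)
  tendsto_zero := by
    simpa [mul_div_right_comm] using h₁.tendsto_zero.mul h₂.tendsto_nhdsGT_zero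
  tendsto_atTop := by
    simpa [mul_div_right_comm] using h₁.tendsto_atTop.atTop_mul_atTop₀ h₂.tendsto_atTop_atTop
  contDiffOn_one := h₁.contDiffOn_one.mul h₂.contDiffOn_one
  contDiffOn_two := h₁.contDiffOn_two.mul h₂.contDiffOn_two
  deriv_pos t ht := by
    rw [h₁.deriv_mul h₂ ht]
    have := h₁.pos ht; have := h₂.pos ht
    have := h₁.deriv_pos t ht; have := h₂.deriv_pos t ht
    positivity
  index_lower _ := h₁.index_lower_mul h₂
  index_upper _ := h₁.index_upper_mul h₂

end IsNFunction

/-- If `Φ₁, Φ₂` are N-functions with indices `s₁, s₂ ≥ 1`, then the pointwise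
product `t ↦ Φ₁(t)·Φ₂(t)` is an N-function with index `4·s₁·s₂·(s₁ + s₂)`. -/
theorem statement7 (Φ₁ Φ₂ : ℝ → ℝ) (s₁ s₂ : ℝ)
    (hΦ₁ : IsNFunction Φ₁ s₁) (hΦ₂ : IsNFunction Φ₂ s₂) :
    IsNFunction (fun t => Φ₁ t * Φ₂ t) (4 * s₁ * s₂ * (s₁ + s₂)) := by
  have hs₁ := hΦ₁.s_ge_one
  have hs₂ := hΦ₂.s_ge_one
  exact (hΦ₁.mul hΦ₂).mono (by nlinarith [mul_le_mul hs₁ hs₂ zero_le_one (by linarith)])
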